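/- arXiv:1212.1759 — 2 statements merged into one kernel-verified Lean document; each statement's English description precedes it below -/
import Mathlib

section
/- Fix n and k ≤ n, and consider the set of words of length n with exactly k `true` entries, partially ordered by reachability (w₀ ≤ w₁ iff w₁ is reachable from w₀). This poset is a lattice: any two elements have a least upper bound and a greatest lower bound. Moreover it is bounded: the word List.replicate k true ++ List.replicate (n−k) false is the least element and List.replicate (n−k) false ++ List.replicate k true is the greatest element (hence, being finite and bounded, the poset is a complete lattice). -/
/-- A single pawn move: a pawn (`true`) advances one square rightward into an
empty square (`false`). -/
def PawnMove (w₀ w₁ : List Bool) : Prop :=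
  ∃ u v : List Bool, w₀ = u ++ [true, false] ++ v ∧ w₁ = u ++ [false, true] ++ v

/-- Reachability: the reflexive-transitive closure of the single-move relation. -/
def Reach : List Bool → List Bool → Prop :=
  Relation.ReflTransGen PawnMove

/-- The `ZMod 2` pairing `⟨w₀|w₁⟩`: `1` if `w₁` is reachable from `w₀`, else `0`. -/
noncomputable def pairing (w₀ w₁ : List Bool) : ZMod 2 :=
  open Classical in if Reach w₀ w₁ then 1 else 0


/-!
Record a word by its prefix-pawn profile `j ↦ #pawns among its first j squares`. A move only
lowers this profile, and conversely `b` is reachable from `a` as soon as both have the same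
length and number of pawns and the profile of `b` lies below that of `a`: if `a` and `b` first
differ at a square holding a pawn in `a` and a hole in `b`, push the run of pawns starting there
one square forward and recurse on the tails. So reachability is the reverse pointwise order
on profiles. The profiles of words of length `n` are exactly the functions that start at `0`,
grow by steps of `0` or `1` and are constant from `n` on; this class is closed under pointwise
`min` and `max`, which therefore give the join and the meet.
-/

def prefixPawns (w : List Bool) (j : ℕ) : ℕ := (w.take j).count true

@[simp] lemma prefixPawns_zero (w : List Bool) : prefixPawns w 0 = 0 := by simp [prefixPawns]

lemma prefixPawns_cons_succ (x : Bool) (w : List Bool) (j : ℕ) :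
    prefixPawns (x :: w) (j + 1) = x.toNat + prefixPawns w j := by
  cases x <;> simp [prefixPawns, add_comm]

lemma prefixPawns_append (u v : List Bool) (j : ℕ) :
    prefixPawns (u ++ v) j = prefixPawns u j + prefixPawns v (j - u.length) := by
  simp [prefixPawns, List.take_append, List.count_append]

lemma prefixPawns_succ (w : List Bool) (j : ℕ) :
    prefixPawns w (j + 1) = prefixPawns w j + w[j]?.toList.count true := by
  simp [prefixPawns, List.take_add_one, List.count_append]

lemma prefixPawns_le_succ (w : List Bool) (j : ℕ) :
    prefixPawns w j ≤ prefixPawns w (j + 1) := by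
  simp [prefixPawns_succ]

lemma prefixPawns_succ_le (w : List Bool) (j : ℕ) :
    prefixPawns w (j + 1) ≤ prefixPawns w j + 1 := by
  rw [prefixPawns_succ]
  rcases w[j]? with _ | _ | _ <;> simp

lemma prefixPawns_le_self (w : List Bool) (j : ℕ) : prefixPawns w j ≤ j :=
  List.count_le_length.trans (List.length_take_le j w)

lemma prefixPawns_le_count (w : List Bool) (j : ℕ) : prefixPawns w j ≤ w.count true :=
  (List.take_sublist j w).count_le _

lemma prefixPawns_of_length_le {w : List Bool} {j : ℕ} (h : w.length ≤ j) :
    prefixPawns w j = w.count true := by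
  simp [prefixPawns, List.take_of_length_le h]

lemma prefixPawns_replicate_true (s j : ℕ) :
    prefixPawns (List.replicate s true) j = min j s := by
  simp [prefixPawns, List.take_replicate]

lemma prefixPawns_replicate_false (s j : ℕ) : prefixPawns (List.replicate s false) j = 0 := by
  simp [prefixPawns, List.take_replicate, List.count_replicate]

lemma prefixPawns_fill_first_hole (m : ℕ) (v : List Bool) (j : ℕ) :
    prefixPawns (List.replicate (m + 1) true ++ v) j =
      min j (prefixPawns (List.replicate m true ++ false :: v) j + 1) := by
  simp only [prefixPawns_append, prefixPawns_replicate_true, List.length_replicate]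
  rcases le_or_gt j m with hj | hj
  · simp [Nat.sub_eq_zero_of_le hj, Nat.sub_eq_zero_of_le (hj.trans m.le_succ)]
    omega
  · obtain ⟨i, rfl⟩ : ∃ i, j = m + 1 + i := ⟨j - (m + 1), by omega⟩
    have hv := prefixPawns_le_self v i
    rw [show m + 1 + i - m = i + 1 by omega, prefixPawns_cons_succ]
    simp
    omega

lemma PawnMove.invariants {a b : List Bool} (h : PawnMove a b) :
    a.length = b.length ∧ a.count true = b.count true ∧ prefixPawns b ≤ prefixPawns a := by
  obtain ⟨u, v, rfl, rfl⟩ := h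
  refine ⟨by simp, by simp [List.count_append], fun j => ?_⟩
  simp only [List.append_assoc, List.cons_append, List.nil_append, prefixPawns_append]
  gcongr
  match j - u.length with
  | 0 => simp
  | 1 => simp [prefixPawns]
  | i + 2 => simp [prefixPawns_cons_succ]

lemma Reach.invariants {a b : List Bool} (h : Reach a b) :
    a.length = b.length ∧ a.count true = b.count true ∧ prefixPawns b ≤ prefixPawns a := by
  induction h with
  | refl => exact ⟨rfl, rfl, le_rfl⟩
  | tail _ hmove ih =>
    obtain ⟨hl, hc, hp⟩ := hmove.invariants
    exact ⟨ih.1.trans hl, ih.2.1.trans hc, hp.trans ih.2.2⟩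

lemma Reach.cons (x : Bool) {a b : List Bool} (h : Reach a b) : Reach (x :: a) (x :: b) :=
  Relation.ReflTransGen.lift (x :: ·)
    (fun _ _ ⟨u, v, h₀, h₁⟩ => ⟨x :: u, v, by simp [h₀], by simp [h₁]⟩) _ _ h

lemma reach_replicate_true_append_false_cons (m : ℕ) (v : List Bool) :
    Reach (List.replicate m true ++ false :: v) (false :: (List.replicate m true ++ v)) := by
  induction m with
  | zero => exact Relation.ReflTransGen.refl
  | succ m ih =>
    have hmove : PawnMove (true :: false :: (List.replicate m true ++ v))
        (false :: true :: (List.replicate m true ++ v)) := ⟨[], _, rfl, rfl⟩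
    simpa [Reach, List.replicate_succ] using (ih.cons true).tail hmove

lemma exists_eq_replicate_true_append_false_cons {w : List Bool} (h : false ∈ w) :
    ∃ m v, w = List.replicate m true ++ false :: v := by
  induction w with
  | nil => simp at h
  | cons x w ih =>
    cases x with
    | false => exact ⟨0, w, rfl⟩
    | true =>
      obtain ⟨m, v, rfl⟩ := ih (by simpa using h)
      exact ⟨m + 1, v, rfl⟩

lemma reach_of_prefixPawns_le {a b : List Bool} (hl : a.length = b.length)
    (hc : a.count true = b.count true) (hp : prefixPawns b ≤ prefixPawns a) : Reach a b := by
  induction b generalizing a with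
  | nil => obtain rfl := List.length_eq_zero_iff.mp hl; exact Relation.ReflTransGen.refl
  | cons y b ih =>
    obtain _ | ⟨x, a⟩ := a
    · simp at hl
    have hl' : a.length = b.length := by simpa using hl
    have hc' : a.count true + x.toNat = b.count true + y.toNat := by
      cases x <;> cases y <;> simpa [List.count_cons] using hc
    have hp' (j : ℕ) : y.toNat + prefixPawns b j ≤ x.toNat + prefixPawns a j := by
      simpa only [prefixPawns_cons_succ] using hp (j + 1)
    cases x <;> cases y
    · exact (ih hl' (by simpa using hc') fun j => by simpa using hp' j).cons false
    · simpa using hp' 0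
    · have hhole : false ∈ a := by
        refine List.count_pos_iff.mp ?_
        have := List.count_true_add_count_false a
        have := List.count_le_length (a := true) (l := b)
        simp only [Bool.toNat_true, Bool.toNat_false, add_zero] at hc'
        omega
      obtain ⟨m, v, rfl⟩ := exists_eq_replicate_true_append_false_cons hhole
      have hpush : Reach (true :: (List.replicate m true ++ false :: v))
          (false :: (List.replicate (m + 1) true ++ v)) := by
        simpa [List.replicate_succ] using reach_replicate_true_append_false_cons (m + 1) v
      refine hpush.trans (Reach.cons false (ih ?_ ?_ fun j => ?_))
      · simp at hl' ⊢; omega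
      · simpa [List.count_append, List.count_replicate, add_right_comm] using hc'
      · rw [prefixPawns_fill_first_hole]
        exact le_min (prefixPawns_le_self b j) (by simpa [add_comm] using hp' j)
    · exact (ih hl' (by simpa using hc') fun j => by simpa using hp' j).cons true

theorem reach_iff {a b : List Bool} :
    Reach a b ↔
      a.length = b.length ∧ a.count true = b.count true ∧ prefixPawns b ≤ prefixPawns a :=
  ⟨Reach.invariants, fun ⟨hl, hc, hp⟩ => reach_of_prefixPawns_le hl hc hp⟩

def ofProfile (g : ℕ → ℕ) (n : ℕ) : List Bool :=
  (List.range n).map fun j => decide (g j < g (j + 1))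

lemma prefixPawns_ofProfile {g : ℕ → ℕ} {n : ℕ} (h0 : g 0 = 0)
    (hmono : ∀ j, g j ≤ g (j + 1)) (hstep : ∀ j, g (j + 1) ≤ g j + 1) :
    ∀ j ≤ n, prefixPawns (ofProfile g n) j = g j := by
  intro j hj
  induction j with
  | zero => simp [h0]
  | succ j ih =>
    have hget : (ofProfile g n)[j]? = some (decide (g j < g (j + 1))) := by
      simp [ofProfile, List.getElem?_range (by omega : j < n)]
    rw [prefixPawns_succ, ih (by omega), hget]
    have := hmono j; have := hstep j
    by_cases hlt : g j < g (j + 1) <;> simp [hlt] <;> omega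

lemma exists_prefixPawns_eq {g : ℕ → ℕ} {n : ℕ} (h0 : g 0 = 0)
    (hmono : ∀ j, g j ≤ g (j + 1)) (hstep : ∀ j, g (j + 1) ≤ g j + 1)
    (hconst : ∀ j, n ≤ j → g j = g n) :
    ∃ c : List Bool, c.length = n ∧ c.count true = g n ∧ prefixPawns c = g := by
  have hlen : (ofProfile g n).length = n := by simp [ofProfile]
  have hprofile := prefixPawns_ofProfile (n := n) h0 hmono hstep
  have hcount : (ofProfile g n).count true = g n := by
    rw [← prefixPawns_of_length_le hlen.le, hprofile n le_rfl]
  refine ⟨ofProfile g n, hlen, hcount, funext fun j => ?_⟩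
  rcases le_total j n with hj | hj
  · exact hprofile j hj
  · rw [prefixPawns_of_length_le (hlen.trans_le hj), hcount, hconst j hj]

section lattice

variable {a b : List Bool}

lemma exists_reach_lub (hl : a.length = b.length) (hc : a.count true = b.count true) :
    ∃ c, c.length = a.length ∧ c.count true = a.count true ∧ Reach a c ∧ Reach b c ∧
      ∀ d, Reach a d → Reach b d → Reach c d := by
  obtain ⟨c, hcl, hcc, hcp⟩ := exists_prefixPawns_eq (g := prefixPawns a ⊓ prefixPawns b)
    (n := a.length) (by simp)
    (fun j => inf_le_inf (prefixPawns_le_succ a j) (prefixPawns_le_succ b j))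
    (fun j => by
      have := prefixPawns_succ_le a j; have := prefixPawns_succ_le b j
      simp only [Pi.inf_apply]; omega)
    (fun j hj => by
      simp [prefixPawns_of_length_le, hl ▸ hj, hl])
  simp only [Pi.inf_apply, prefixPawns_of_length_le le_rfl, prefixPawns_of_length_le hl.ge,
    hc, min_self] at hcc
  refine ⟨c, hcl, hcc.trans hc.symm, ?_, ?_, fun d had hbd => ?_⟩
  · exact reach_iff.mpr ⟨hcl.symm, by rw [hcc, hc], hcp ▸ inf_le_left⟩
  · exact reach_iff.mpr ⟨hl.symm.trans hcl.symm, hcc.symm, hcp ▸ inf_le_right⟩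
  · obtain ⟨hdl, hdc, hdp⟩ := reach_iff.mp had
    exact reach_iff.mpr ⟨hcl.trans hdl, by rw [hcc, ← hc, hdc],
      hcp ▸ le_inf hdp (reach_iff.mp hbd).2.2⟩

lemma exists_reach_glb (hl : a.length = b.length) (hc : a.count true = b.count true) :
    ∃ c, c.length = a.length ∧ c.count true = a.count true ∧ Reach c a ∧ Reach c b ∧
      ∀ d, Reach d a → Reach d b → Reach d c := by
  obtain ⟨c, hcl, hcc, hcp⟩ := exists_prefixPawns_eq (g := prefixPawns a ⊔ prefixPawns b)
    (n := a.length) (by simp)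
    (fun j => sup_le_sup (prefixPawns_le_succ a j) (prefixPawns_le_succ b j))
    (fun j => by
      have := prefixPawns_succ_le a j; have := prefixPawns_succ_le b j
      simp only [Pi.sup_apply]; omega)
    (fun j hj => by
      simp [prefixPawns_of_length_le, hl ▸ hj, hl])
  simp only [Pi.sup_apply, prefixPawns_of_length_le le_rfl, prefixPawns_of_length_le hl.ge,
    hc, max_self] at hcc
  refine ⟨c, hcl, hcc.trans hc.symm, ?_, ?_, fun d hda hdb => ?_⟩
  · exact reach_iff.mpr ⟨hcl, by rw [hcc, hc], hcp ▸ le_sup_left⟩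
  · exact reach_iff.mpr ⟨hcl.trans hl, hcc, hcp ▸ le_sup_right⟩
  · obtain ⟨hdl, hdc, hdp⟩ := reach_iff.mp hda
    exact reach_iff.mpr ⟨hdl.trans hcl.symm, by rw [hcc, ← hc, hdc],
      hcp ▸ sup_le hdp (reach_iff.mp hdb).2.2⟩

end lattice

lemma replicate_true_append_replicate_false_reach (w : List Bool) :
    Reach (List.replicate (w.count true) true ++ List.replicate (w.count false) false) w := by
  refine reach_iff.mpr ⟨by simp [List.count_true_add_count_false],
    by simp [List.count_append, List.count_replicate], fun j => ?_⟩
  simp only [prefixPawns_append, prefixPawns_replicate_true, prefixPawns_replicate_false]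
  exact le_min (prefixPawns_le_self w j) (prefixPawns_le_count w j)

lemma reach_replicate_false_append_replicate_true (w : List Bool) :
    Reach w (List.replicate (w.count false) false ++ List.replicate (w.count true) true) := by
  refine reach_iff.mpr ⟨by simp, by simp [List.count_append, List.count_replicate], fun j => ?_⟩
  simp only [prefixPawns_append, prefixPawns_replicate_true, prefixPawns_replicate_false,
    List.length_replicate, zero_add]
  rcases le_total j w.length with hj | hj
  · have hsplit := List.count_true_add_count_false (w.take j)
    have hholes := (List.take_sublist j w).count_le false
    rw [List.length_take_of_le hj] at hsplit
    exact min_le_of_left_le (by unfold prefixPawns; omega)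
  · rw [prefixPawns_of_length_le hj]
    exact min_le_right _ _

/-- The set of words of length `n` with exactly `k` pawns, ordered by
reachability, is a lattice, with least element `true^k ++ false^(n-k)` and
greatest element `false^(n-k) ++ true^k`. -/
theorem reach_lattice (n k : ℕ) (hk : k ≤ n) :
    let S : Set (List Bool) := {w | w.length = n ∧ w.count true = k}
    let bot : List Bool := List.replicate k true ++ List.replicate (n - k) false
    let top : List Bool := List.replicate (n - k) false ++ List.replicate k true
    -- least upper bounds exist
    (∀ a ∈ S, ∀ b ∈ S, ∃ c ∈ S, Reach a c ∧ Reach b c ∧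
      ∀ d ∈ S, Reach a d → Reach b d → Reach c d) ∧
    -- greatest lower bounds exist
    (∀ a ∈ S, ∀ b ∈ S, ∃ c ∈ S, Reach c a ∧ Reach c b ∧
      ∀ d ∈ S, Reach d a → Reach d b → Reach d c) ∧
    -- least element
    (bot ∈ S ∧ ∀ w ∈ S, Reach bot w) ∧
    -- greatest element
    (top ∈ S ∧ ∀ w ∈ S, Reach w top) := by
  intro S bot top
  have hholes (w : List Bool) (hw : w ∈ S) : w.count false = n - k := by
    have := List.count_true_add_count_false w
    rw [hw.1, hw.2] at this
    omega
  refine ⟨fun a ha b hb => ?_, fun a ha b hb => ?_, ⟨?_, fun w hw => ?_⟩,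
    ⟨?_, fun w hw => ?_⟩⟩
  · obtain ⟨c, hcl, hcc, hac, hbc, hlub⟩ :=
      exists_reach_lub (ha.1.trans hb.1.symm) (ha.2.trans hb.2.symm)
    exact ⟨c, ⟨hcl.trans ha.1, hcc.trans ha.2⟩, hac, hbc, fun d _ => hlub d⟩
  · obtain ⟨c, hcl, hcc, hca, hcb, hglb⟩ :=
      exists_reach_glb (ha.1.trans hb.1.symm) (ha.2.trans hb.2.symm)
    exact ⟨c, ⟨hcl.trans ha.1, hcc.trans ha.2⟩, hca, hcb, fun d _ => hglb d⟩
  · exact ⟨by simp [bot]; omega, by simp [bot, List.count_replicate]⟩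
  · simpa only [hw.2, hholes w hw] using replicate_true_append_replicate_false_reach w
  · exact ⟨by simp [top]; omega, by simp [top, List.count_replicate]⟩
  · simpa only [hw.2, hholes w hw] using reach_replicate_false_append_replicate_true w
end

section
/- The initial anti-pawn creation and annihilation operators are adjoint with respect to the pairing: for all words x and y, ⟨a_{q,0}† x | y⟩ = ⟨x | a_{q,0} y⟩. Explicitly: if y = false :: y′ then ⟨false :: x | y⟩ = ⟨x | y′⟩, while if y begins with true or is empty then ⟨false :: x | y⟩ = 0. -/
lemma move_false_cons {a w : List Bool} (h : PawnMove (false :: a) w) :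
    ∃ b, w = false :: b ∧ PawnMove a b := by
  obtain ⟨u, v, h1, h2⟩ := h
  cases u with
  | nil => simp at h1
  | cons c u' =>
    simp only [List.cons_append] at h1 h2
    obtain ⟨hc, ha⟩ := List.cons.injEq .. ▸ h1
    exact ⟨u' ++ [false, true] ++ v, by simp [h2, ← hc], u', v, by simp [ha], rfl⟩

lemma move_cons {a b : List Bool} (c : Bool) (h : PawnMove a b) :
    PawnMove (c :: a) (c :: b) := by
  obtain ⟨u, v, h1, h2⟩ := h
  exact ⟨c :: u, v, by simp [h1], by simp [h2]⟩

lemma reach_false_cons {x z : List Bool} (h : Reach (false :: x) z) :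
    ∃ y, z = false :: y ∧ Reach x y := by
  induction h with
  | refl => exact ⟨x, rfl, Relation.ReflTransGen.refl⟩
  | tail _ hmv ih =>
    obtain ⟨y, rfl, hr⟩ := ih
    obtain ⟨y', rfl, hmv'⟩ := move_false_cons hmv
    exact ⟨y', rfl, hr.tail hmv'⟩

lemma reach_cons {x y : List Bool} (c : Bool) (h : Reach x y) :
    Reach (c :: x) (c :: y) := by
  induction h with
  | refl => exact Relation.ReflTransGen.refl
  | tail _ hmv ih => exact ih.tail (move_cons c hmv)

/-- Initial anti-pawn creation and annihilation are adjoint: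
`⟨a_{q,0}† x | y⟩ = ⟨x | a_{q,0} y⟩`. If `y = false :: y'` then
`⟨false :: x | y⟩ = ⟨x | y'⟩`; if `y` begins with `true` or is empty then
`⟨false :: x | y⟩ = 0`. -/
theorem initial_antipawn_adjoint :
    (∀ x y' : List Bool, pairing (false :: x) (false :: y') = pairing x y') ∧
    (∀ x y : List Bool, (y = [] ∨ y.head? = some true) →
      pairing (false :: x) y = 0) := by
  constructor
  · intro x y'
    unfold pairing
    congr 1
    apply propext
    constructor
    · intro h
      obtain ⟨y, hy, hr⟩ := reach_false_cons h
      cases hy; exact hr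
    · exact reach_cons false
  · intro x y hy
    unfold pairing
    rw [if_neg]
    intro h
    obtain ⟨y', rfl, _⟩ := reach_false_cons h
    rcases hy with h' | h' <;> simp at h'
end
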